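/- arXiv:1903.12062 — 5 statements merged into one kernel-verified Lean document; each statement's English description precedes it below -/
import Mathlib

section
/- The Rayleigh quotient of ψ(z) = 1/cosh z for D equals -8/15: ∫_ℝ ψ·(Dψ) dz / ∫_ℝ ψ² dz = -8/15, where D ε = -(1/cosh²z)(ε'' - 2 tanh z ε' + ε); concretely ∫_ℝ (1/cosh z)·D(1/cosh)(z) dz = -16/15 and ∫_ℝ dz/cosh²z = 2. -/
open MeasureTheory Filter Topology Set

-- basic facts test
example (z : ℝ) : Real.cosh z ≠ 0 := (Real.cosh_pos _).ne'
example (z : ℝ) : Real.cosh z ^ 2 = Real.sinh z ^ 2 + 1 := Real.cosh_sq z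
example : Set.Iic (0:ℝ) ∪ Set.Ioi 0 = Set.univ := Set.Iic_union_Ioi

lemma hasDerivAt_sech (z : ℝ) :
    HasDerivAt (fun z => 1 / Real.cosh z) (-Real.sinh z / Real.cosh z ^ 2) z := by
  have h := (hasDerivAt_const z (1:ℝ)).div (Real.hasDerivAt_cosh z) (Real.cosh_pos _).ne'
  refine h.congr_deriv ?_
  symm
  field_simp
  ring

lemma hasDerivAt_sech' (z : ℝ) :
    HasDerivAt (fun z => -Real.sinh z / Real.cosh z ^ 2)
      ((2 * Real.sinh z ^ 2 - Real.cosh z ^ 2) / Real.cosh z ^ 3) z := by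
  have h := ((Real.hasDerivAt_sinh z).neg).div ((Real.hasDerivAt_cosh z).pow 2)
    (pow_ne_zero 2 (Real.cosh_pos _).ne')
  refine h.congr_deriv ?_
  symm
  have hc := Real.cosh_pos z
  simp only [Pi.pow_apply, Pi.neg_apply]
  field_simp
  ring

lemma hasDerivAt_tanh (z : ℝ) :
    HasDerivAt Real.tanh (1 / Real.cosh z ^ 2) z := by
  have hf : Real.tanh = fun z => Real.sinh z / Real.cosh z :=
    funext fun z => Real.tanh_eq_sinh_div_cosh z
  rw [hf]
  have h := (Real.hasDerivAt_sinh z).div (Real.hasDerivAt_cosh z) (Real.cosh_pos _).ne'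
  refine h.congr_deriv ?_
  symm
  have := Real.cosh_sq_sub_sinh_sq z
  field_simp
  nlinarith [this]

lemma tendsto_tanh_atTop : Tendsto Real.tanh atTop (𝓝 1) := by
  have hf : ∀ x : ℝ, Real.tanh x = 1 - 2 / (Real.exp (2 * x) + 1) := by
    intro x
    have h1 : Real.exp x ≠ 0 := (Real.exp_pos x).ne'
    have h2 : Real.exp (2 * x) + 1 > 0 := by positivity
    rw [Real.tanh_eq_sinh_div_cosh, Real.sinh_eq, Real.cosh_eq]
    rw [show (2:ℝ) * x = x + x by ring, Real.exp_add]
    have h3 : Real.exp (-x) = 1 / Real.exp x := by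
      rw [Real.exp_neg]; exact (inv_eq_one_div _)
    rw [h3]
    field_simp
    ring
  have : Tendsto (fun x : ℝ => 1 - 2 / (Real.exp (2 * x) + 1)) atTop (𝓝 (1 - 0)) := by
    apply Tendsto.sub tendsto_const_nhds
    apply Tendsto.div_atTop tendsto_const_nhds
    apply Filter.tendsto_atTop_add_const_right
    exact Real.tendsto_exp_atTop.comp (tendsto_id.const_mul_atTop two_pos)
  rw [sub_zero] at this
  exact this.congr (fun x => (hf x).symm)

lemma tendsto_tanh_atBot : Tendsto Real.tanh atBot (𝓝 (-1)) := by
  have h : Tendsto (fun x : ℝ => -Real.tanh (-x)) atBot (𝓝 (-1)) := by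
    exact (tendsto_tanh_atTop.comp tendsto_neg_atBot_atTop).neg
  refine h.congr fun x => ?_
  rw [Real.tanh_neg, neg_neg]

noncomputable def Gfun (z : ℝ) : ℝ := -4 * (Real.tanh z ^ 3 / 3 - Real.tanh z ^ 5 / 5)

lemma hasDerivAt_Gfun (z : ℝ) :
    HasDerivAt Gfun (-4 * Real.sinh z ^ 2 / Real.cosh z ^ 6) z := by
  have h := ((((hasDerivAt_tanh z).pow 3).div_const 3).sub
    (((hasDerivAt_tanh z).pow 5).div_const 5)).const_mul (-4 : ℝ)
  refine h.congr_deriv ?_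
  symm
  have hc := Real.cosh_pos z
  have hsq := Real.cosh_sq z
  rw [Real.tanh_eq_sinh_div_cosh]
  norm_num
  field_simp
  linear_combination (Real.sinh z ^ 2) * hsq

lemma tendsto_Gfun_atTop : Tendsto Gfun atTop (𝓝 (-8/15)) := by
  have h : Tendsto Gfun atTop (𝓝 (-4 * ((1:ℝ) ^ 3 / 3 - 1 ^ 5 / 5))) :=
    (((tendsto_tanh_atTop.pow 3).div_const 3).sub
      ((tendsto_tanh_atTop.pow 5).div_const 5)).const_mul (-4)
  convert h using 2
  norm_num

lemma tendsto_Gfun_atBot : Tendsto Gfun atBot (𝓝 (8/15)) := by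
  have h : Tendsto Gfun atBot (𝓝 (-4 * ((-1:ℝ) ^ 3 / 3 - (-1) ^ 5 / 5))) :=
    (((tendsto_tanh_atBot.pow 3).div_const 3).sub
      ((tendsto_tanh_atBot.pow 5).div_const 5)).const_mul (-4)
  convert h using 2
  norm_num

lemma integrableOn_Iic_of_even {f : ℝ → ℝ} (hev : ∀ x, f (-x) = f x)
    (h : IntegrableOn f (Ioi (0:ℝ))) : IntegrableOn f (Iic (0:ℝ)) := by
  have A : MeasurableEmbedding fun x : ℝ => -x :=
    (Homeomorph.neg ℝ).isClosedEmbedding.measurableEmbedding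
  have h' : IntegrableOn f (Ici (0:ℝ)) := by
    rwa [integrableOn_Ici_iff_integrableOn_Ioi]
  have hpre : (fun x : ℝ => -x) ⁻¹' Iic (0:ℝ) = Ici (0:ℝ) := by
    ext x; simp
  have hmap : Integrable f ((volume.restrict (Ici (0:ℝ))).map (fun x : ℝ => -x)) := by
    rw [A.integrable_map_iff]
    have hfc : f ∘ (fun x : ℝ => -x) = f := funext hev
    rwa [hfc]
  have hm : volume.restrict (Iic (0:ℝ)) = (volume.restrict (Ici (0:ℝ))).map (fun x : ℝ => -x) := by
    rw [← hpre, ← Measure.restrict_map A.measurable measurableSet_Iic,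
      Measure.map_neg_eq_self (volume : Measure ℝ)]
  rw [IntegrableOn, hm]
  exact hmap

lemma integrable_of_even_Ioi {f : ℝ → ℝ} (hev : ∀ x, f (-x) = f x)
    (h : IntegrableOn f (Ioi (0:ℝ))) : Integrable f := by
  rw [← integrableOn_univ, ← Set.Iic_union_Ioi (a := (0:ℝ))]
  exact (integrableOn_Iic_of_even hev h).union h

open MeasureTheory in
theorem rayleigh_quotient_sech (ψ : ℝ → ℝ) (Dψ : ℝ → ℝ)
    (hψ : ∀ z, ψ z = 1 / Real.cosh z)
    (hDψ : ∀ z, Dψ z = -(1 / Real.cosh z ^ 2) *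
        (deriv (deriv ψ) z - 2 * Real.tanh z * deriv ψ z + ψ z)) :
    (∫ z : ℝ, ψ z * Dψ z) = -16 / 15 ∧
    (∫ z : ℝ, ψ z ^ 2) = 2 ∧
    (∫ z : ℝ, ψ z * Dψ z) / (∫ z : ℝ, ψ z ^ 2) = -8 / 15 := by
  have hψf : ψ = fun z => 1 / Real.cosh z := funext hψ
  have hd1 : deriv ψ = fun z => -Real.sinh z / Real.cosh z ^ 2 := by
    rw [hψf]; exact funext fun z => (hasDerivAt_sech z).deriv
  have hd2 : ∀ z, deriv (deriv ψ) z
      = (2 * Real.sinh z ^ 2 - Real.cosh z ^ 2) / Real.cosh z ^ 3 := by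
    intro z; rw [hd1]; exact (hasDerivAt_sech' z).deriv
  -- pointwise identities
  have hint1 : ∀ z, ψ z * Dψ z = -4 * Real.sinh z ^ 2 / Real.cosh z ^ 6 := by
    intro z
    rw [hDψ z, hd2 z, hd1, hψ z, Real.tanh_eq_sinh_div_cosh]
    have hc := Real.cosh_pos z
    have hsq := Real.cosh_sq z
    field_simp
    ring_nf
  have hint2 : ∀ z, ψ z ^ 2 = 1 / Real.cosh z ^ 2 := by
    intro z; rw [hψ z]; rw [div_pow, one_pow]
  -- integrability
  have hI2int : Integrable (fun z : ℝ => 1 / Real.cosh z ^ 2) := by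
    apply integrable_of_even_Ioi (fun x => by rw [Real.cosh_neg])
    exact integrableOn_Ioi_deriv_of_nonneg'
      (fun x _ => hasDerivAt_tanh x)
      (fun x _ => by positivity)
      tendsto_tanh_atTop
  have hI1int : Integrable (fun z : ℝ => -4 * Real.sinh z ^ 2 / Real.cosh z ^ 6) := by
    apply integrable_of_even_Ioi (fun x => by rw [Real.sinh_neg, Real.cosh_neg]; ring)
    exact integrableOn_Ioi_deriv_of_nonpos'
      (fun x _ => hasDerivAt_Gfun x)
      (fun x _ => by
        have h1 : (0:ℝ) ≤ 4 * Real.sinh x ^ 2 / Real.cosh x ^ 6 := by positivity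
        have h2 : -4 * Real.sinh x ^ 2 / Real.cosh x ^ 6
            = -(4 * Real.sinh x ^ 2 / Real.cosh x ^ 6) := by ring
        rw [h2]
        exact neg_nonpos.mpr h1)
      tendsto_Gfun_atTop
  -- integrals
  have hI1 : (∫ z : ℝ, ψ z * Dψ z) = -16 / 15 := by
    have := integral_of_hasDerivAt_of_tendsto
      (f := Gfun) (f' := fun z => -4 * Real.sinh z ^ 2 / Real.cosh z ^ 6)
      (fun x => hasDerivAt_Gfun x) hI1int tendsto_Gfun_atBot tendsto_Gfun_atTop
    rw [show (∫ z : ℝ, ψ z * Dψ z) = ∫ z : ℝ, -4 * Real.sinh z ^ 2 / Real.cosh z ^ 6 from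
      integral_congr_ae (Filter.Eventually.of_forall hint1), this]
    norm_num
  have hI2 : (∫ z : ℝ, ψ z ^ 2) = 2 := by
    have := integral_of_hasDerivAt_of_tendsto
      (f := Real.tanh) (f' := fun z => 1 / Real.cosh z ^ 2)
      (fun x => hasDerivAt_tanh x) hI2int tendsto_tanh_atBot tendsto_tanh_atTop
    rw [show (∫ z : ℝ, ψ z ^ 2) = ∫ z : ℝ, 1 / Real.cosh z ^ 2 from
      integral_congr_ae (Filter.Eventually.of_forall hint2), this]
    norm_num
  refine ⟨hI1, hI2, ?_⟩
  rw [hI1, hI2]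
  norm_num
end

section
/- Let J_i(v) = α_i e^{√c v} + β_i e^{-√c v} for i = 1,2,3,4 with c > 0, and suppose α_i α_k = β_{i'} β_{k'} whenever {i,k,i',k'} = {1,2,3,4}. Then Σ_{i≠k} J_i(v_i)·J_k'(v_k) = 0 whenever v₁+v₂+v₃+v₄ = 0. -/
/-!
Put `x_i = exp (√c v_i)`, so that `J_i(v_i) = α_i x_i + β_i x_i⁻¹` and
`J_i'(v_i) = √c (α_i x_i - β_i x_i⁻¹)`. In the sum over ordered pairs `i ≠ k` the mixed terms
`β_i α_k x_k / x_i - α_i β_k x_i / x_k` cancel under `i ↔ k`, leaving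
`√c Σ_{i ≠ k} (α_i α_k x_i x_k - β_i β_k / (x_i x_k))`. Since `Σ v_i = 0`, `1 / (x_i x_k) = x_{i'} x_{k'}`
for the complementary pair, and `β_i β_k = α_{i'} α_{k'}`, so the negative part is the positive part
re-indexed by complementation.
-/

open Finset

theorem sum_ite_ne_add_mul_sub {ι R : Type*} [Fintype ι] [DecidableEq ι] [CommRing R]
    (a b : ι → R) :
    (∑ i, ∑ k, if i ≠ k then (a i + b i) * (a k - b k) else 0) =
      ∑ i, ∑ k, if i ≠ k then a i * a k - b i * b k else 0 := by
  have expand : ∀ i k, (if i ≠ k then (a i + b i) * (a k - b k) else 0) =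
      (if i ≠ k then a i * a k - b i * b k else 0) +
        ((if i ≠ k then b i * a k else 0) - if i ≠ k then a i * b k else 0) := by
    intro i k
    split_ifs <;> ring
  have cross : (∑ i, ∑ k, if i ≠ k then b i * a k else 0) =
      ∑ i, ∑ k, if i ≠ k then a i * b k else 0 := by
    rw [sum_comm]
    simp only [ne_comm, mul_comm]
  simp only [expand, sum_add_distrib, sum_sub_distrib, cross, sub_self, add_zero]

theorem hasDerivAt_mul_exp_add_mul_exp_neg (α β s x : ℝ) :
    HasDerivAt (fun y => α * Real.exp (s * y) + β * Real.exp (-s * y))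
      (s * (α * Real.exp (s * x) - β * Real.exp (-s * x))) x :=
  ((((hasDerivAt_id x).const_mul s).exp.const_mul α).add
    (((hasDerivAt_id x).const_mul (-s)).exp.const_mul β)).congr_deriv (by simp only [id]; ring)

theorem Fin.sum_univ_four_of_insert_eq_univ {M : Type*} [AddCommMonoid M] (f : Fin 4 → M)
    {i k i' k' : Fin 4} (h : ({i, k, i', k'} : Finset (Fin 4)) = univ) :
    ∑ j, f j = f i + f k + f i' + f k' := by
  have hd : i ∉ ({k, i', k'} : Finset (Fin 4)) ∧ k ∉ ({i', k'} : Finset (Fin 4)) ∧ i' ≠ k' := by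
    revert h; revert i k i' k'; decide
  rw [← h, sum_insert hd.1, sum_insert hd.2.1, sum_pair hd.2.2]
  abel

theorem Fin.sum_ite_ne_mul_sub_mul_eq_zero_of_compl_pairs {R : Type*} [CommRing R]
    (α β x y : Fin 4 → R)
    (hαβ : ∀ i k i' k' : Fin 4,
      ({i, k, i', k'} : Finset (Fin 4)) = univ → α i * α k = β i' * β k')
    (hxy : ∀ i k i' k' : Fin 4,
      ({i, k, i', k'} : Finset (Fin 4)) = univ → y i * y k = x i' * x k') :
    (∑ i, ∑ k, if i ≠ k then α i * x i * (α k * x k) - β i * y i * (β k * y k) else 0) = 0 := by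
  have compl : ∀ i k i' k' : Fin 4, ({i, k, i', k'} : Finset (Fin 4)) = univ →
      β i * y i * (β k * y k) = α i' * x i' * (α k' * x k') := by
    intro i k i' k' h
    have h' : ({i', k', i, k} : Finset (Fin 4)) = univ := by
      rw [← h]; ext; simp only [mem_insert, mem_singleton]; tauto
    rw [mul_mul_mul_comm, hxy i k i' k' h, ← hαβ i' k' i k h']
    ring
  simp only [Fin.sum_univ_four, ne_eq, Fin.reduceEq, not_false_eq_true, not_true_eq_false,
    ite_true, ite_false]
  -- Complementation permutes the six unordered pairs, each of which occurs twice in the sum.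
  linear_combination (-2 : R) * (compl 0 1 2 3 (by decide) + compl 0 2 1 3 (by decide)
    + compl 0 3 1 2 (by decide) + compl 1 2 0 3 (by decide) + compl 1 3 0 2 (by decide)
    + compl 2 3 0 1 (by decide))

open Finset in
theorem separable_minimal_R4_general (c : ℝ) (α β : Fin 4 → ℝ)
    (J : Fin 4 → ℝ → ℝ)
    (hJ : ∀ i v, J i v = α i * Real.exp (Real.sqrt c * v)
                        + β i * Real.exp (-(Real.sqrt c) * v))
    (hcoef : ∀ i k i' k' : Fin 4,
      ({i, k, i', k'} : Finset (Fin 4)) = Finset.univ → α i * α k = β i' * β k') :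
    ∀ v : Fin 4 → ℝ, (∑ i, v i) = 0 →
      (∑ i : Fin 4, ∑ k : Fin 4,
        if i ≠ k then J i (v i) * deriv (J k) (v k) else 0) = 0 := by
  intro v hv
  set s := Real.sqrt c
  have hderiv : ∀ k x, deriv (J k) x = s * (α k * Real.exp (s * x) - β k * Real.exp (-s * x)) :=
    fun k x => by
      rw [show J k = _ from funext (hJ k)]
      exact (hasDerivAt_mul_exp_add_mul_exp_neg (α k) (β k) s x).deriv
  have hexp : ∀ i k i' k' : Fin 4, ({i, k, i', k'} : Finset (Fin 4)) = univ →
      Real.exp (-s * v i) * Real.exp (-s * v k) = Real.exp (s * v i') * Real.exp (s * v k') := by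
    intro i k i' k' h
    rw [← Real.exp_add, ← Real.exp_add]
    congr 1
    linear_combination s * Fin.sum_univ_four_of_insert_eq_univ v h - s * hv
  calc (∑ i, ∑ k, if i ≠ k then J i (v i) * deriv (J k) (v k) else 0)
      = s * ∑ i, ∑ k, if i ≠ k then
          (α i * Real.exp (s * v i) + β i * Real.exp (-s * v i)) *
            (α k * Real.exp (s * v k) - β k * Real.exp (-s * v k)) else 0 := by
        simp only [hJ, hderiv, mul_sum, mul_ite, mul_zero, mul_left_comm s]
    _ = s * ∑ i, ∑ k, if i ≠ k then
          α i * Real.exp (s * v i) * (α k * Real.exp (s * v k)) -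
            β i * Real.exp (-s * v i) * (β k * Real.exp (-s * v k)) else 0 := by
        rw [sum_ite_ne_add_mul_sub]
    _ = 0 := by
        rw [Fin.sum_ite_ne_mul_sub_mul_eq_zero_of_compl_pairs α β _ _ hcoef hexp, mul_zero]

open Finset in
theorem separable_minimal_R4 (c : ℝ) (hc : 0 < c) (α β : Fin 4 → ℝ)
    (J : Fin 4 → ℝ → ℝ)
    (hJ : ∀ i v, J i v = α i * Real.exp (Real.sqrt c * v)
                        + β i * Real.exp (-(Real.sqrt c) * v))
    (hcoef : ∀ i k i' k' : Fin 4,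
      ({i, k, i', k'} : Finset (Fin 4)) = Finset.univ → α i * α k = β i' * β k') :
    ∀ v : Fin 4 → ℝ, (∑ i, v i) = 0 →
      (∑ i : Fin 4, ∑ k : Fin 4,
        if i ≠ k then J i (v i) * deriv (J k) (v k) else 0) = 0 :=
  separable_minimal_R4_general c α β J hJ hcoef
end

section
/- If all b_i (i = 1,…,N) satisfy B·b_i - b_i² = const with B = Σ b_i, then the b_i take at most two distinct values b_± = (B/2)(1 ± √(1-c)); if r of them equal b₊ and N-r equal b₋, then (N-2r)√(1-c) = N-2, i.e. √(1-c) = (N-2)/(N-2r). -/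
/-!
Completing the square gives `(bᵢ - B/2)² = (B/2)² (1 - c)`, so every `bᵢ` is one of the roots
`b± = (B/2)(1 ± √(1-c))`. If the roots differ, summing `r` copies of `b₊` and `N - r` of `b₋`
gives `B = (B/2)(N - (N - 2r)√(1-c))`, and `B ≠ 0` can be cancelled. If they coincide, the sum
is `N·B/2 = B`, so `N = 2` and both sides vanish.
-/

open Finset

/-- For `B ≠ 0` the equation forces `c ≤ 1`; for `B = 0` both roots are `0`, whatever junk
value `√(1 - c)` takes. -/
theorem eq_half_mul_one_add_sqrt_or_eq_half_mul_one_sub_sqrt {B c x : ℝ}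
    (h : B * x - x ^ 2 = c * B ^ 2 / 4) :
    x = B / 2 * (1 + √(1 - c)) ∨ x = B / 2 * (1 - √(1 - c)) := by
  have hsq : (x - B / 2) ^ 2 = (B / 2) ^ 2 * (1 - c) := by linear_combination -h
  have hroot : (B / 2 * √(1 - c)) ^ 2 = (x - B / 2) ^ 2 := by
    rcases le_or_gt 0 (1 - c) with hc | hc
    · rw [mul_pow, Real.sq_sqrt hc, hsq]
    · have : (x - B / 2) ^ 2 = 0 :=
        le_antisymm (hsq ▸ mul_nonpos_of_nonneg_of_nonpos (sq_nonneg _) hc.le) (sq_nonneg _)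
      rw [this, Real.sqrt_eq_zero_of_nonpos hc.le]
      ring
  rcases sq_eq_sq_iff_eq_or_eq_neg.1 hroot with h' | h'
  · left; linear_combination -h'
  · right; linear_combination h'

theorem Finset.sum_eq_card_smul_add_card_smul_of_forall_eq_or_eq {ι M : Type*} [Fintype ι]
    [AddCommMonoid M] [DecidableEq M] {f : ι → M} {p q : M} (hpq : p ≠ q)
    (hf : ∀ i, f i = p ∨ f i = q) :
    ∑ i, f i = #{i | f i = p} • p + #{i | f i = q} • q := by
  have hne : univ.filter (fun i => ¬f i = p) = univ.filter (fun i => f i = q) := by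
    ext i
    rcases hf i with h | h <;> simp [h, hpq, hpq.symm]
  rw [← sum_filter_add_sum_filter_not univ (fun i => f i = p), hne,
    sum_congr rfl fun i hi => (mem_filter.1 hi).2, sum_congr rfl fun i hi => (mem_filter.1 hi).2,
    sum_const, sum_const]

open Finset in
theorem linear_case_classification (N : ℕ) (b : Fin N → ℝ) (B c : ℝ)
    (hB : B = ∑ i, b i) (hB0 : B ≠ 0)
    (hconst : ∀ i, B * b i - (b i) ^ 2 = c * B ^ 2 / 4) :
    (∀ i, b i = B / 2 * (1 + Real.sqrt (1 - c)) ∨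
          b i = B / 2 * (1 - Real.sqrt (1 - c))) ∧
    (∀ r : ℕ,
      (Finset.univ.filter fun i => b i = B / 2 * (1 + Real.sqrt (1 - c))).card = r →
      (Finset.univ.filter fun i => b i = B / 2 * (1 - Real.sqrt (1 - c))).card = N - r →
      ((N : ℝ) - 2 * r) * Real.sqrt (1 - c) = (N : ℝ) - 2) := by
  have hroots i := eq_half_mul_one_add_sqrt_or_eq_half_mul_one_sub_sqrt (hconst i)
  refine ⟨hroots, fun r hr hr' => ?_⟩
  set S := √(1 - c)
  rcases eq_or_ne S 0 with hS | hS
  · have hhalf i : b i = B / 2 := by rcases hroots i with h | h <;> rw [h, hS] <;> ring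
    have hsum : B = N * (B / 2) := by
      calc B = ∑ i, b i := hB
        _ = N * (B / 2) := by simp [hhalf]
    have hN : (N : ℝ) = 2 := mul_left_cancel₀ hB0 (by linear_combination -2 * hsum)
    rw [hS, hN]
    ring
  · have hpq : B / 2 * (1 + S) ≠ B / 2 * (1 - S) := fun h =>
      mul_ne_zero hB0 hS (by linear_combination h)
    have hrN : r ≤ N := hr ▸ (card_filter_le _ _).trans_eq (card_fin N)
    have hsum := sum_eq_card_smul_add_card_smul_of_forall_eq_or_eq hpq hroots
    rw [hr, hr', ← hB, nsmul_eq_mul, nsmul_eq_mul, Nat.cast_sub hrN] at hsum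
    have hfactor : B / 2 * (((N : ℝ) - 2 * r) * S - (N - 2)) = 0 := by
      linear_combination hsum
    linear_combination (mul_eq_zero.1 hfactor).resolve_left (div_ne_zero hB0 two_ne_zero)
end

section
/- For the torus graph equation, the conserved quantity holds: if θ : ℝ → ℝ satisfies s c [ s c θ̈ (k²s² + l²c²) + θ̇²((l²-k²)s²c² + 2s⁴k² - 2c⁴l²) + s²c²(s²-c²) ] = 0 with s = sin θ(t), c = cos θ(t), and θ̇, sc ≠ 0, then d/dt [ s²c²/√(c²s² + (k²s²+l²c²)θ̇²) ] = 0. -/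
/-!
Write `s = sin θ`, `c = cos θ`, `u = θ'`, `W = k²s² + l²c²`, and `N = s²c²`, `D = s²c² + W u²`
for the numerator and the radicand of the conserved quantity. Since `s' = c u` and `c' = -s u`,
the derivative of `N / √D` vanishes exactly when `2 N' D - N D' = 0`, and this expression is,
as a polynomial identity in `s, c, u, θ''`, the multiple `-2 s c u` of the bracket in the
equation of motion.
-/

open Real

theorem HasDerivAt.div_sqrt {f g : ℝ → ℝ} {f' g' x : ℝ} (hf : HasDerivAt f f' x)
    (hg : HasDerivAt g g' x) (hgx : 0 < g x) :
    HasDerivAt (fun y => f y / √(g y)) ((2 * f' * g x - f x * g') / (2 * g x * √(g x))) x := by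
  have hsqrt : √(g x) ≠ 0 := (sqrt_pos.mpr hgx).ne'
  refine (hf.div (hg.sqrt hgx.ne') hsqrt).congr_deriv ?_
  field_simp
  rw [sq_sqrt hgx.le]
  ring

/-- The bracket of the equation of motion of the torus graph, with `s = sin θ`, `c = cos θ`,
`u = θ'` and `a = θ''`. -/
def torusEquationOfMotion (k l s c u a : ℝ) : ℝ :=
  s * c * a * (k ^ 2 * s ^ 2 + l ^ 2 * c ^ 2)
    + u ^ 2 * ((l ^ 2 - k ^ 2) * s ^ 2 * c ^ 2 + 2 * s ^ 4 * k ^ 2 - 2 * c ^ 4 * l ^ 2)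
    + s ^ 2 * c ^ 2 * (s ^ 2 - c ^ 2)

section Torus

variable {θ v : ℝ → ℝ} {u a t : ℝ}

theorem hasDerivAt_sin_sq_mul_cos_sq (hθ : HasDerivAt θ u t) :
    HasDerivAt (fun t => sin (θ t) ^ 2 * cos (θ t) ^ 2)
      (2 * sin (θ t) * cos (θ t) * u * (cos (θ t) ^ 2 - sin (θ t) ^ 2)) t := by
  refine (((hθ.sin).pow 2).mul ((hθ.cos).pow 2)).congr_deriv ?_
  simp only [Pi.pow_apply]
  ring

theorem hasDerivAt_torus_radicand (k l : ℝ) (hθ : HasDerivAt θ u t) (hv : HasDerivAt v a t) :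
    HasDerivAt
      (fun t => cos (θ t) ^ 2 * sin (θ t) ^ 2
        + (k ^ 2 * sin (θ t) ^ 2 + l ^ 2 * cos (θ t) ^ 2) * v t ^ 2)
      (2 * sin (θ t) * cos (θ t) * u * (cos (θ t) ^ 2 - sin (θ t) ^ 2)
        + 2 * sin (θ t) * cos (θ t) * u * (k ^ 2 - l ^ 2) * v t ^ 2
        + 2 * (k ^ 2 * sin (θ t) ^ 2 + l ^ 2 * cos (θ t) ^ 2) * v t * a) t := by
  have hs := hθ.sin
  have hc := hθ.cos
  refine (((hc.pow 2).mul (hs.pow 2)).add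
    ((((hs.pow 2).const_mul (k ^ 2)).add ((hc.pow 2).const_mul (l ^ 2))).mul
      (hv.pow 2))).congr_deriv ?_
  simp only [Pi.pow_apply, Pi.add_apply]
  ring

end Torus

theorem torus_radicand_pos (k l s c u : ℝ) (hsc : s * c ≠ 0) :
    0 < c ^ 2 * s ^ 2 + (k ^ 2 * s ^ 2 + l ^ 2 * c ^ 2) * u ^ 2 := by
  have : 0 < (s * c) ^ 2 := by positivity
  nlinarith [sq_nonneg (k * s * u), sq_nonneg (l * c * u)]

theorem torus_energy_derivative_numerator (k l s c u a : ℝ) :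
    2 * (2 * s * c * u * (c ^ 2 - s ^ 2)) * (c ^ 2 * s ^ 2 + (k ^ 2 * s ^ 2 + l ^ 2 * c ^ 2) * u ^ 2)
      - s ^ 2 * c ^ 2 * (2 * s * c * u * (c ^ 2 - s ^ 2) + 2 * s * c * u * (k ^ 2 - l ^ 2) * u ^ 2
        + 2 * (k ^ 2 * s ^ 2 + l ^ 2 * c ^ 2) * u * a)
      = -2 * s * c * u * torusEquationOfMotion k l s c u a := by
  unfold torusEquationOfMotion
  ring

theorem torus_conserved_quantity (k l : ℝ) (θ : ℝ → ℝ) (hθ : ContDiff ℝ 2 θ)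
    (hne : ∀ t, deriv θ t ≠ 0 ∧ Real.sin (θ t) * Real.cos (θ t) ≠ 0)
    (hode : ∀ t,
      Real.sin (θ t) * Real.cos (θ t) *
        (Real.sin (θ t) * Real.cos (θ t) * deriv (deriv θ) t *
            (k ^ 2 * Real.sin (θ t) ^ 2 + l ^ 2 * Real.cos (θ t) ^ 2)
          + (deriv θ t) ^ 2 *
              ((l ^ 2 - k ^ 2) * Real.sin (θ t) ^ 2 * Real.cos (θ t) ^ 2
                + 2 * Real.sin (θ t) ^ 4 * k ^ 2
                - 2 * Real.cos (θ t) ^ 4 * l ^ 2)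
          + Real.sin (θ t) ^ 2 * Real.cos (θ t) ^ 2 *
              (Real.sin (θ t) ^ 2 - Real.cos (θ t) ^ 2)) = 0) :
    ∀ t : ℝ,
      deriv (fun t' =>
        Real.sin (θ t') ^ 2 * Real.cos (θ t') ^ 2 /
          Real.sqrt (Real.cos (θ t') ^ 2 * Real.sin (θ t') ^ 2
            + (k ^ 2 * Real.sin (θ t') ^ 2 + l ^ 2 * Real.cos (θ t') ^ 2)
                * (deriv θ t') ^ 2)) t = 0 := by
  intro t
  have hsc := (hne t).2
  have hθt : HasDerivAt θ (deriv θ t) t := (hθ.differentiable (by norm_num) t).hasDerivAt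
  have hθ't : HasDerivAt (deriv θ) (deriv (deriv θ) t) t := by
    have : Differentiable ℝ (deriv θ) := by
      simpa using hθ.differentiable_iteratedDeriv 1 (by norm_num)
    exact (this t).hasDerivAt
  have hmotion : torusEquationOfMotion k l (sin (θ t)) (cos (θ t)) (deriv θ t)
      (deriv (deriv θ) t) = 0 := (mul_eq_zero.mp (hode t)).resolve_left hsc
  rw [((hasDerivAt_sin_sq_mul_cos_sq hθt).div_sqrt (hasDerivAt_torus_radicand k l hθt hθ't)
    (torus_radicand_pos k l _ _ _ hsc)).deriv, torus_energy_derivative_numerator, hmotion]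
  simp
end

section
/- Given α(φ) with sin α(φ) = 1/√(cos²φ + cosh²γ sin²φ) and cos α(φ) = -sinh γ · sin φ/√(cos²φ + cosh²γ sin²φ), the ODE α̇² + sin²α·(1 - cosh²γ · sin²α) = 0 is satisfied for all φ. -/
open Real

/- Since sin α = 1 / √(1 + sinh² γ sin² φ) > 0, the two hypotheses say cot α(φ) = -sinh γ sin φ.
Differentiating cot α gives α̇ = sinh γ cos φ sin² α, and the ODE becomes the identity
cosh² γ = 1 + sinh² γ. -/

theorem mul_one_add_sq_eq_neg_of_cos_eq_mul_sin {α c : ℝ → ℝ} {α' c' x : ℝ}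
    (hα : HasDerivAt α α' x) (hc : HasDerivAt c c' x) (hsin : sin (α x) ≠ 0)
    (hcot : ∀ y, cos (α y) = c y * sin (α y)) :
    α' * (1 + c x ^ 2) = -c' := by
  have hcos : HasDerivAt (fun y => cos (α y)) (-sin (α x) * α') x :=
    (hasDerivAt_cos _).comp x hα
  have hmul : HasDerivAt (fun y => c y * sin (α y)) (c' * sin (α x) + c x * (cos (α x) * α')) x :=
    hc.mul ((hasDerivAt_sin _).comp x hα)
  have h := hcos.unique (by simpa only [← hcot] using hmul)
  rw [hcot x] at h
  apply mul_left_cancel₀ hsin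
  linear_combination -h

theorem cos_sq_add_cosh_sq_mul_sin_sq (γ φ : ℝ) :
    cos φ ^ 2 + cosh γ ^ 2 * sin φ ^ 2 = 1 + sinh γ ^ 2 * sin φ ^ 2 := by
  linear_combination sin φ ^ 2 * cosh_sq γ + cos_sq_add_sin_sq φ

theorem hopf_great_circle_ode_general (γ : ℝ) (α : ℝ → ℝ)
    (hα : Differentiable ℝ α)
    (hsin : ∀ φ, Real.sin (α φ) =
      1 / Real.sqrt (Real.cos φ ^ 2 + Real.cosh γ ^ 2 * Real.sin φ ^ 2))
    (hcos : ∀ φ, Real.cos (α φ) =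
      -Real.sinh γ * Real.sin φ /
        Real.sqrt (Real.cos φ ^ 2 + Real.cosh γ ^ 2 * Real.sin φ ^ 2)) :
    ∀ φ : ℝ,
      (deriv α φ) ^ 2 + Real.sin (α φ) ^ 2 *
        (1 - Real.cosh γ ^ 2 * Real.sin (α φ) ^ 2) = 0 := by
  intro φ
  simp only [cos_sq_add_cosh_sq_mul_sin_sq] at hsin hcos
  have hcot : ∀ x, cos (α x) = -sinh γ * sin x * sin (α x) := fun x => by
    rw [hcos, hsin, mul_one_div]
  have hsin_ne : sin (α φ) ≠ 0 := by rw [hsin]; positivity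
  have hsin_sq : sin (α φ) ^ 2 * (1 + sinh γ ^ 2 * sin φ ^ 2) = 1 := by
    rw [hsin, div_pow, sq_sqrt (by positivity)]
    field_simp
  have hcot_deriv := mul_one_add_sq_eq_neg_of_cos_eq_mul_sin (hα φ).hasDerivAt
    ((hasDerivAt_sin φ).const_mul (-sinh γ)) hsin_ne hcot
  have hderiv : deriv α φ = sinh γ * cos φ * sin (α φ) ^ 2 := by
    linear_combination sin (α φ) ^ 2 * hcot_deriv - deriv α φ * hsin_sq
  rw [hderiv]
  linear_combination (-sin (α φ) ^ 4) * cosh_sq γ - sin (α φ) ^ 2 * hsin_sq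
    + sinh γ ^ 2 * sin (α φ) ^ 4 * sin_sq_add_cos_sq φ

theorem hopf_great_circle_ode (γ : ℝ) (hγ : 0 < γ) (α : ℝ → ℝ)
    (hα : Differentiable ℝ α)
    (hsin : ∀ φ, Real.sin (α φ) =
      1 / Real.sqrt (Real.cos φ ^ 2 + Real.cosh γ ^ 2 * Real.sin φ ^ 2))
    (hcos : ∀ φ, Real.cos (α φ) =
      -Real.sinh γ * Real.sin φ /
        Real.sqrt (Real.cos φ ^ 2 + Real.cosh γ ^ 2 * Real.sin φ ^ 2)) :
    ∀ φ : ℝ,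
      (deriv α φ) ^ 2 + Real.sin (α φ) ^ 2 *
        (1 - Real.cosh γ ^ 2 * Real.sin (α φ) ^ 2) = 0 :=
  hopf_great_circle_ode_general γ α hα hsin hcos
end
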